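/- arXiv:2510.11500 — 4 statements merged into one kernel-verified Lean document; each statement's English description precedes it below -/
import Mathlib

section
/- Let n ≥ 1, let H : ℝⁿ → ℝ be continuously differentiable, let J be an n×n real matrix with Jᵀ = −J (skew-symmetric), let Δt ∈ ℝ, and let u, v ∈ ℝⁿ satisfy the average vector field update v − u = Δt · J · (∫₀¹ ∇H((1−ξ)·v + ξ·u) dξ). Then H(v) = H(u), i.e., the AVF discretization of a system ∂ₜu = J ∇H(u) with antisymmetric J exactly conserves the energy H. -/
/-- The average vector field (AVF) discretization of `∂ₜu = J ∇H(u)` with a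
skew-symmetric matrix `J` exactly conserves the energy `H`. -/
theorem stmt_1 (n : ℕ) (hn : 1 ≤ n)
    (H : EuclideanSpace ℝ (Fin n) → ℝ) (hH : ContDiff ℝ 1 H)
    (J : Matrix (Fin n) (Fin n) ℝ) (hJ : J.transpose = -J)
    (Δt : ℝ) (u v : EuclideanSpace ℝ (Fin n))
    (hupd : v - u = Δt • (Matrix.toEuclideanLin J)
        (∫ ξ in (0:ℝ)..1, gradient H ((1 - ξ) • v + ξ • u))) :
    H v = H u := by
  set p : ℝ → EuclideanSpace ℝ (Fin n) := fun ξ => (1 - ξ) • v + ξ • u with hp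
  set w : EuclideanSpace ℝ (Fin n) := ∫ ξ in (0:ℝ)..1, gradient H (p ξ) with hw
  have hpeq : p = fun ξ => v + ξ • (u - v) := by
    funext ξ; simp only [hp]; module
  have hpderiv : ∀ ξ : ℝ, HasDerivAt p (u - v) ξ := by
    intro ξ
    rw [hpeq]
    simpa using ((hasDerivAt_id ξ).smul_const (u - v)).const_add v
  have hdiff : ∀ x : EuclideanSpace ℝ (Fin n), DifferentiableAt ℝ H x :=
    fun x => (hH.differentiable one_ne_zero).differentiableAt
  -- continuity of the gradient
  have hgradcont : Continuous (fun x : EuclideanSpace ℝ (Fin n) => gradient H x) := by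
    have : Continuous (fun x : EuclideanSpace ℝ (Fin n) =>
        (InnerProductSpace.toDual ℝ (EuclideanSpace ℝ (Fin n))).symm (fderiv ℝ H x)) :=
      (InnerProductSpace.toDual ℝ (EuclideanSpace ℝ (Fin n))).symm.continuous.comp
        (hH.continuous_fderiv one_ne_zero)
    exact this
  have hpcont : Continuous p := by
    rw [hpeq]; continuity
  -- FTC
  have hderiv : ∀ ξ ∈ Set.uIcc (0:ℝ) 1,
      HasDerivAt (fun t => H (p t)) (inner ℝ (gradient H (p ξ)) (u - v) : ℝ) ξ := by
    intro ξ _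
    have h1 : HasFDerivAt H
        ((InnerProductSpace.toDual ℝ (EuclideanSpace ℝ (Fin n))) (gradient H (p ξ))) (p ξ) :=
      (hdiff (p ξ)).hasGradientAt.hasFDerivAt
    have := h1.comp_hasDerivAt ξ (hpderiv ξ)
    rw [InnerProductSpace.toDual_apply_apply] at this
    exact this
  have hintcont : Continuous fun ξ => (inner ℝ (gradient H (p ξ)) (u - v) : ℝ) := by
    exact (hgradcont.comp hpcont).inner continuous_const
  have hFTC : ∫ ξ in (0:ℝ)..1, (inner ℝ (gradient H (p ξ)) (u - v) : ℝ)
      = H (p 1) - H (p 0) :=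
    intervalIntegral.integral_eq_sub_of_hasDerivAt hderiv
      (hintcont.intervalIntegrable 0 1)
  have hp0 : p 0 = v := by simp [hp]
  have hp1 : p 1 = u := by simp [hp]
  -- pull inner product out of integral
  have hinner : ∫ ξ in (0:ℝ)..1, (inner ℝ (gradient H (p ξ)) (u - v) : ℝ)
      = (inner ℝ w (u - v) : ℝ) := by
    have hInt : IntervalIntegrable (fun ξ => gradient H (p ξ))
        MeasureTheory.volume 0 1 :=
      (hgradcont.comp hpcont).intervalIntegrable 0 1
    have := ((innerSL ℝ (u - v)) : EuclideanSpace ℝ (Fin n) →L[ℝ] ℝ).intervalIntegral_comp_comm hInt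
    simp only [innerSL_apply_apply] at this
    rw [show (inner ℝ w (u - v) : ℝ) = inner ℝ (u - v) w from real_inner_comm _ _, ← this]
    exact intervalIntegral.integral_congr fun ξ _ => real_inner_comm _ _
  -- skew-symmetry kills the inner product
  have hskew : (inner ℝ w (Matrix.toEuclideanLin J w) : ℝ) = 0 := by
    have hadj : Matrix.toEuclideanLin J.transpose
        = LinearMap.adjoint (Matrix.toEuclideanLin J) := by
      have := Matrix.toEuclideanLin_conjTranspose_eq_adjoint J
      simpa [Matrix.conjTranspose_eq_transpose_of_trivial] using this
    have h1 : (inner ℝ w (Matrix.toEuclideanLin J w) : ℝ)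
        = inner ℝ (Matrix.toEuclideanLin J.transpose w) w := by
      rw [hadj, LinearMap.adjoint_inner_left]
    rw [hJ, map_neg, LinearMap.neg_apply, inner_neg_left,
      real_inner_comm ((Matrix.toEuclideanLin J) w) w] at h1
    rw [real_inner_comm]
    linarith
  have key : (inner ℝ w (u - v) : ℝ) = 0 := by
    have huv : u - v = -(Δt • (Matrix.toEuclideanLin J) w) := by
      rw [← hupd]; abel
    rw [huv, inner_neg_right, inner_smul_right, hskew]
    ring
  have : H u - H v = 0 := by
    rw [← hp0, ← hp1, ← hFTC, hinner, key]
  linarith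
end

section
/- Let m, c > 0, e ∈ ℝ, Δt > 0, let U⁰, U¹, X⁰, X¹ ∈ ℝ³ with (X¹ − X⁰)_j ≠ 0 for each coordinate j, let s ≥ 1 and A₀, …, A_s ∈ ℝ³ with A₀ = X⁰ and A_s = X¹, let E : ℝ³ → ℝ³ be continuous, and let B̄ ∈ ℝ³. Write U^ξ = (1−ξ)·U¹ + ξ·U⁰, X_i^ξ = (1−ξ)·A_i + ξ·A_{i−1}, γ(u) = √(1 + ‖u‖²/(m²c²)), and D_i = diag((A_i − A_{i−1})_j/(X¹ − X⁰)_j). If the position update (X¹ − X⁰)/Δt = ∫₀¹ U^ξ/(m·γ(U^ξ)) dξ and the momentum update (U¹ − U⁰)/Δt = e·( Σ_{i=1}^{s} D_i·∫₀¹ E(X_i^ξ) dξ + (1/m)·(∫₀¹ U^ξ/γ(U^ξ) dξ) ×₃ (B̄/c) ) hold, then m·c²·(γ(U¹) − γ(U⁰)) = e·Σ_{i=1}^{s} ⟨A_i − A_{i−1}, ∫₀¹ E(X_i^ξ) dξ⟩. -/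
open scoped RealInnerProductSpace

/-- The relativistic factor `γ(u) = √(1 + ‖u‖²/(m²c²))` of a momentum `u ∈ ℝ³`. -/
noncomputable def gam (m c : ℝ) (u : EuclideanSpace ℝ (Fin 3)) : ℝ :=
  Real.sqrt (1 + ‖u‖ ^ 2 / (m ^ 2 * c ^ 2))

/-- The cross product on `ℝ³`. -/
noncomputable def cross3 (a b : EuclideanSpace ℝ (Fin 3)) : EuclideanSpace ℝ (Fin 3) :=
  (WithLp.equiv 2 (Fin 3 → ℝ)).symm
    ![a 1 * b 2 - a 2 * b 1, a 2 * b 0 - a 0 * b 2, a 0 * b 1 - a 1 * b 0]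

/-- Action of a diagonal `3×3` matrix `diag d` on a vector of `ℝ³`. -/
noncomputable def diagMul (d : Fin 3 → ℝ) (w : EuclideanSpace ℝ (Fin 3)) :
    EuclideanSpace ℝ (Fin 3) :=
  (WithLp.equiv 2 (Fin 3 → ℝ)).symm
    ((Matrix.diagonal d).mulVec (WithLp.equiv 2 (Fin 3 → ℝ) w))

lemma gam_pos {m c : ℝ} (hm : 0 < m) (hc : 0 < c) (u : EuclideanSpace ℝ (Fin 3)) :
    0 < gam m c u := by
  unfold gam; apply Real.sqrt_pos.mpr; positivity

lemma gam_continuous (m c : ℝ) : Continuous (gam m c) := by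
  unfold gam; fun_prop

lemma inner_cross3_self (a b : EuclideanSpace ℝ (Fin 3)) : ⟪cross3 a b, a⟫ = 0 := by
  simp [cross3, PiLp.inner_apply, Fin.sum_univ_three, WithLp.equiv_symm_apply, PiLp.toLp_apply]
  ring

lemma cross3_smul_left (r : ℝ) (a b : EuclideanSpace ℝ (Fin 3)) :
    cross3 (r • a) b = r • cross3 a b := by
  unfold cross3
  ext i
  fin_cases i <;>
    simp [WithLp.equiv_symm_apply, PiLp.toLp_apply, PiLp.smul_apply] <;> ring

lemma inner_diagMul (d : Fin 3 → ℝ) (w v : EuclideanSpace ℝ (Fin 3)) :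
    ⟪diagMul d w, v⟫ = ∑ j, d j * w j * v j := by
  simp [diagMul, PiLp.inner_apply, Matrix.mulVec_diagonal,
    WithLp.equiv_symm_apply, PiLp.toLp_apply]
  exact Finset.sum_congr rfl fun _ _ => by ring

lemma hasDerivAt_gam (m c : ℝ) (hm : 0 < m) (hc : 0 < c)
    (U0 U1 : EuclideanSpace ℝ (Fin 3)) (ξ : ℝ) :
    HasDerivAt (fun t => gam m c ((1 - t) • U1 + t • U0))
      (⟪U0 - U1, (1 - ξ) • U1 + ξ • U0⟫ /
        (m ^ 2 * c ^ 2 * gam m c ((1 - ξ) • U1 + ξ • U0))) ξ := by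
  set u : ℝ → EuclideanSpace ℝ (Fin 3) := fun t => (1 - t) • U1 + t • U0 with hu_def
  have hu : HasDerivAt u (U0 - U1) ξ := by
    have h1 : HasDerivAt (fun t : ℝ => (1 - t) • U1) ((-1 : ℝ) • U1) ξ :=
      (((hasDerivAt_id ξ).const_sub 1)).smul_const U1
    have h2 : HasDerivAt (fun t : ℝ => t • U0) ((1 : ℝ) • U0) ξ :=
      (hasDerivAt_id ξ).smul_const U0
    have := h1.add h2
    refine this.congr_deriv ?_
    rw [neg_smul, one_smul, one_smul]; abel
  have hval : (0:ℝ) < 1 + ⟪u ξ, u ξ⟫ / (m ^ 2 * c ^ 2) := by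
    have : (0:ℝ) ≤ ⟪u ξ, u ξ⟫ := real_inner_self_nonneg
    positivity
  have hinner : HasDerivAt (fun t => 1 + ⟪u t, u t⟫ / (m ^ 2 * c ^ 2))
      ((⟪u ξ, U0 - U1⟫ + ⟪U0 - U1, u ξ⟫) / (m ^ 2 * c ^ 2)) ξ :=
    ((HasDerivAt.inner ℝ hu hu).div_const _).const_add 1
  have hsqrt := (Real.hasDerivAt_sqrt hval.ne').comp ξ hinner
  have hfun : (fun t => gam m c (u t))
      = fun t => Real.sqrt (1 + ⟪u t, u t⟫ / (m ^ 2 * c ^ 2)) := by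
    funext t; rw [gam, real_inner_self_eq_norm_sq]
  rw [hfun]
  have hγ : gam m c (u ξ) = Real.sqrt (1 + ⟪u ξ, u ξ⟫ / (m ^ 2 * c ^ 2)) := by
    rw [gam, real_inner_self_eq_norm_sq]
  refine hsqrt.congr_deriv ?_
  rw [hγ, real_inner_comm (u ξ) (U0 - U1)]
  have hs : Real.sqrt (1 + ⟪u ξ, u ξ⟫ / (m ^ 2 * c ^ 2)) ≠ 0 :=
    (Real.sqrt_pos.mpr hval).ne'
  field_simp
  ring

/-- Discrete energy balance for a single particle in the implicit AVF scheme: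
under the AVF position and momentum updates, the change of the particle's
relativistic kinetic energy over one time step equals the work of the
time-averaged electric field along the segments `A₀, …, A_s` of the particle
trajectory; the magnetic term does no discrete work. -/
theorem stmt_11 (m c e Δt : ℝ) (hm : 0 < m) (hc : 0 < c) (hΔt : 0 < Δt)
    (U0 U1 X0 X1 : EuclideanSpace ℝ (Fin 3))
    (hne : ∀ j : Fin 3, (X1 - X0) j ≠ 0)
    (s : ℕ) (hs : 1 ≤ s) (A : ℕ → EuclideanSpace ℝ (Fin 3))
    (hA0 : A 0 = X0) (hAs : A s = X1)
    (E : EuclideanSpace ℝ (Fin 3) → EuclideanSpace ℝ (Fin 3)) (hE : Continuous E)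
    (Bbar : EuclideanSpace ℝ (Fin 3))
    (hpos : (1 / Δt) • (X1 - X0)
      = ∫ ξ in (0:ℝ)..1,
          (1 / (m * gam m c ((1 - ξ) • U1 + ξ • U0))) • ((1 - ξ) • U1 + ξ • U0))
    (hmom : (1 / Δt) • (U1 - U0)
      = e • ((∑ i ∈ Finset.range s,
            diagMul (fun j => (A (i + 1) - A i) j / (X1 - X0) j)
              (∫ ξ in (0:ℝ)..1, E ((1 - ξ) • A (i + 1) + ξ • A i)))
          + (1 / m) • cross3
              (∫ ξ in (0:ℝ)..1,
                (gam m c ((1 - ξ) • U1 + ξ • U0))⁻¹ • ((1 - ξ) • U1 + ξ • U0))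
              ((1 / c) • Bbar))) :
    m * c ^ 2 * (gam m c U1 - gam m c U0)
      = e * ∑ i ∈ Finset.range s,
          ⟪A (i + 1) - A i, ∫ ξ in (0:ℝ)..1, E ((1 - ξ) • A (i + 1) + ξ • A i)⟫ := by
  set u : ℝ → EuclideanSpace ℝ (Fin 3) := fun t => (1 - t) • U1 + t • U0 with hu_def
  simp only [show ∀ ξ : ℝ, (1 - ξ) • U1 + ξ • U0 = u ξ from fun _ => rfl] at hpos hmom
  have hγpos : ∀ v, 0 < gam m c v := gam_pos hm hc
  have hucont : Continuous u := by fun_prop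
  have hγucont : Continuous fun ξ => gam m c (u ξ) := (gam_continuous m c).comp hucont
  have hγune : ∀ ξ, m * gam m c (u ξ) ≠ 0 := fun ξ => (mul_pos hm (hγpos _)).ne'
  have hGcont : Continuous fun ξ => (1 / (m * gam m c (u ξ))) • u ξ := by
    exact (continuous_const.div (continuous_const.mul hγucont) hγune).smul hucont
  have hint : IntervalIntegrable (fun ξ => (1 / (m * gam m c (u ξ))) • u ξ)
      MeasureTheory.volume 0 1 := hGcont.intervalIntegrable 0 1
  -- Step 1: the AVF identity for γ
  have key1 : m * c ^ 2 * (gam m c U1 - gam m c U0)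
      = ⟪U1 - U0, (1 / Δt) • (X1 - X0)⟫ := by
    rw [hpos,
      show (inner ℝ (U1 - U0) (∫ ξ in (0:ℝ)..1, (1 / (m * gam m c (u ξ))) • u ξ) : ℝ)
        = (innerSL ℝ (U1 - U0)) (∫ ξ in (0:ℝ)..1, (1 / (m * gam m c (u ξ))) • u ξ) from rfl,
      ← ContinuousLinearMap.intervalIntegral_comp_comm (innerSL ℝ (U1 - U0)) hint]
    have hderiv : ∀ ξ ∈ Set.uIcc (0:ℝ) 1,
        HasDerivAt (fun t => -(m * c ^ 2 * gam m c (u t)))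
          ((innerSL ℝ (U1 - U0)) ((1 / (m * gam m c (u ξ))) • u ξ)) ξ := by
      intro ξ _
      have h := ((hasDerivAt_gam m c hm hc U0 U1 ξ).const_mul (m * c ^ 2)).neg
      refine h.congr_deriv ?_
      simp only [innerSL_apply_apply, real_inner_smul_right]
      rw [show U1 - U0 = -(U0 - U1) from (neg_sub U0 U1).symm, inner_neg_left]
      have h1 : gam m c ((1 - ξ) • U1 + ξ • U0) ≠ 0 := (hγpos _).ne'
      field_simp
      simp only [hu_def, PiLp.inner_apply, PiLp.add_apply, PiLp.smul_apply,
        PiLp.sub_apply, smul_eq_mul, RCLike.inner_apply, starRingEnd_apply, star_trivial]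
      field_simp
    have hint2 : IntervalIntegrable
        (fun ξ => (innerSL ℝ (U1 - U0)) ((1 / (m * gam m c (u ξ))) • u ξ))
        MeasureTheory.volume 0 1 :=
      ((innerSL ℝ (U1 - U0)).continuous.comp hGcont).intervalIntegrable 0 1
    rw [intervalIntegral.integral_eq_sub_of_hasDerivAt hderiv hint2]
    have h0 : u 0 = U1 := by simp [hu_def]
    have h1 : u 1 = U0 := by simp [hu_def]
    rw [h0, h1]
    ring
  -- Step 2: eliminate the integral of γ⁻¹ • u
  have hW : (∫ ξ in (0:ℝ)..1, (gam m c (u ξ))⁻¹ • u ξ)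
      = (m / Δt) • (X1 - X0) := by
    have h2 : (1 / Δt) • (X1 - X0)
        = (1 / m) • ∫ ξ in (0:ℝ)..1, (gam m c (u ξ))⁻¹ • u ξ := by
      rw [hpos, ← intervalIntegral.integral_smul]
      congr 1; funext ξ
      rw [smul_smul]
      congr 1
      field_simp
    have h3 := congrArg (fun v : EuclideanSpace ℝ (Fin 3) => m • v) h2
    simp only [smul_smul] at h3
    rw [show m * (1 / m) = 1 by field_simp, one_smul,
      show m * (1 / Δt) = m / Δt by ring] at h3
    exact h3.symm
  -- Step 3: assemble
  rw [key1, real_inner_smul_right, ← real_inner_smul_left, hmom,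
    real_inner_smul_left, inner_add_left]
  have hcross : ⟪(1 / m) • cross3
      (∫ ξ in (0:ℝ)..1, (gam m c (u ξ))⁻¹ • u ξ) ((1 / c) • Bbar), X1 - X0⟫ = 0 := by
    rw [hW, cross3_smul_left, real_inner_smul_left, real_inner_smul_left,
      inner_cross3_self]
    ring
  rw [hcross, add_zero, sum_inner]
  congr 1
  apply Finset.sum_congr rfl
  intro i _
  rw [inner_diagMul, PiLp.inner_apply]
  apply Finset.sum_congr rfl
  intro j _
  have hb : X1 j - X0 j ≠ 0 := by simpa [PiLp.sub_apply] using hne j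
  simp only [RCLike.inner_apply, starRingEnd_apply, star_trivial, PiLp.sub_apply]
  field_simp
end

section
/- Let m, c > 0, let ρ : ℝ³ → ℝ and v : ℝ³ → ℝ³ be differentiable at x ∈ ℝ³, write γ = γ(m·v) = √(1 + ‖v‖²/c²) and w = v/γ (so w : ℝ³ → ℝ³ is differentiable at x). Then at the point x the following vector identity holds: ρ·(Dv)[w] = ∇(ρ·⟨w, v⟩) − v ×₃ (∇×(ρ·w)) − ρ·c²·∇(γ(m·v)) − ⟨v, ∇ρ⟩·w − ρ·⟨v, ∇(1/γ(m·v))⟩·v, where (Dv)[w] denotes the Fréchet derivative of v at x applied to the vector w(x) (i.e., the directional derivative (w·∇)v), ∇ denotes the gradient, and ∇×G denotes the curl of a vector field G. -/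
open scoped RealInnerProductSpace

/-- The partial derivative `∂ᵢG(x)` of a vector field `G : ℝ³ → ℝ³` in the
`i`-th standard coordinate direction. -/
noncomputable def pderiv3 (G : EuclideanSpace ℝ (Fin 3) → EuclideanSpace ℝ (Fin 3))
    (i : Fin 3) (x : EuclideanSpace ℝ (Fin 3)) : EuclideanSpace ℝ (Fin 3) :=
  fderiv ℝ G x (EuclideanSpace.single i 1)

/-- The curl `(∇×G)(x) = (∂₂G₃ − ∂₃G₂, ∂₃G₁ − ∂₁G₃, ∂₁G₂ − ∂₂G₁)(x)`
(written here with 0-based indices). -/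
noncomputable def curl3 (G : EuclideanSpace ℝ (Fin 3) → EuclideanSpace ℝ (Fin 3))
    (x : EuclideanSpace ℝ (Fin 3)) : EuclideanSpace ℝ (Fin 3) :=
  (WithLp.equiv 2 (Fin 3 → ℝ)).symm
    ![pderiv3 G 1 x 2 - pderiv3 G 2 x 1,
      pderiv3 G 2 x 0 - pderiv3 G 0 x 2,
      pderiv3 G 0 x 1 - pderiv3 G 1 x 0]

lemma grad_apply' (f : EuclideanSpace ℝ (Fin 3) → ℝ) (x : EuclideanSpace ℝ (Fin 3)) (i : Fin 3) :
    gradient f x i = fderiv ℝ f x (EuclideanSpace.single i 1) := by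
  have h : ⟪gradient f x, EuclideanSpace.single i 1⟫ = fderiv ℝ f x (EuclideanSpace.single i 1) := by
    rw [show gradient f x = (InnerProductSpace.toDual ℝ _).symm (fderiv ℝ f x) from rfl]
    exact InnerProductSpace.toDual_symm_apply
  rw [EuclideanSpace.inner_single_right] at h
  simpa using h

lemma eucl_decomp' (u : EuclideanSpace ℝ (Fin 3)) :
    u = u 0 • EuclideanSpace.single 0 1 + u 1 • EuclideanSpace.single 1 1
      + u 2 • EuclideanSpace.single 2 1 := by
  ext i
  fin_cases i <;> simp [EuclideanSpace.single_apply]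

lemma inner_expand' (a b : EuclideanSpace ℝ (Fin 3)) :
    ⟪a, b⟫ = a 0 * b 0 + a 1 * b 1 + a 2 * b 2 := by
  simp [PiLp.inner_apply, Fin.sum_univ_three, RCLike.inner_apply]
  ring

lemma cross3_apply' (a b : EuclideanSpace ℝ (Fin 3)) (i : Fin 3) :
    cross3 a b i
      = ![a 1 * b 2 - a 2 * b 1, a 2 * b 0 - a 0 * b 2, a 0 * b 1 - a 1 * b 0] i := rfl

lemma curl3_apply' (G : EuclideanSpace ℝ (Fin 3) → EuclideanSpace ℝ (Fin 3))
    (x : EuclideanSpace ℝ (Fin 3)) (i : Fin 3) :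
    curl3 G x i
      = ![fderiv ℝ G x (EuclideanSpace.single 1 1) 2 - fderiv ℝ G x (EuclideanSpace.single 2 1) 1,
          fderiv ℝ G x (EuclideanSpace.single 2 1) 0 - fderiv ℝ G x (EuclideanSpace.single 0 1) 2,
          fderiv ℝ G x (EuclideanSpace.single 0 1) 1 - fderiv ℝ G x (EuclideanSpace.single 1 1) 0] i
      := rfl

lemma normsq_expand' (a : EuclideanSpace ℝ (Fin 3)) :
    ‖a‖ ^ 2 = a 0 * a 0 + a 1 * a 1 + a 2 * a 2 := by
  rw [← real_inner_self_eq_norm_sq, inner_expand']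

set_option maxHeartbeats 1600000 in
/-- Proposition B.1: with `γ(mv) = √(1 + ‖v‖²/c²)` and `w = v/γ(mv)`,
`ρ (Dv)[w] = ∇(ρ⟨w,v⟩) − v × (∇×(ρw)) − ρc²∇(γ(mv)) − ⟨v,∇ρ⟩ w − ρ⟨v,∇(1/γ(mv))⟩ v`
pointwise at `x`. -/
theorem stmt_12 (m c : ℝ) (hm : 0 < m) (hc : 0 < c)
    (ρ : EuclideanSpace ℝ (Fin 3) → ℝ)
    (v : EuclideanSpace ℝ (Fin 3) → EuclideanSpace ℝ (Fin 3))
    (x : EuclideanSpace ℝ (Fin 3))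
    (hρ : DifferentiableAt ℝ ρ x) (hv : DifferentiableAt ℝ v x) :
    ρ x • fderiv ℝ v x ((Real.sqrt (1 + ‖v x‖ ^ 2 / c ^ 2))⁻¹ • v x)
      = gradient (fun y => ρ y * ⟪(Real.sqrt (1 + ‖v y‖ ^ 2 / c ^ 2))⁻¹ • v y, v y⟫) x
        - cross3 (v x)
            (curl3 (fun y => ρ y • (Real.sqrt (1 + ‖v y‖ ^ 2 / c ^ 2))⁻¹ • v y) x)
        - (ρ x * c ^ 2) • gradient (fun y => Real.sqrt (1 + ‖v y‖ ^ 2 / c ^ 2)) x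
        - ⟪v x, gradient ρ x⟫ • ((Real.sqrt (1 + ‖v x‖ ^ 2 / c ^ 2))⁻¹ • v x)
        - (ρ x * ⟪v x, gradient (fun y => (Real.sqrt (1 + ‖v y‖ ^ 2 / c ^ 2))⁻¹) x⟫) • v x := by
  have hc2 : (c : ℝ) ^ 2 ≠ 0 := by positivity
  have hupos : (0:ℝ) < 1 + ‖v x‖ ^ 2 / c ^ 2 := by positivity
  have hune : (1 : ℝ) + ‖v x‖ ^ 2 / c ^ 2 ≠ 0 := ne_of_gt hupos
  have hGpos : 0 < Real.sqrt (1 + ‖v x‖ ^ 2 / c ^ 2) := Real.sqrt_pos.2 hupos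
  have hGne : Real.sqrt (1 + ‖v x‖ ^ 2 / c ^ 2) ≠ 0 := ne_of_gt hGpos
  -- the squared-norm function
  have hNfun : (fun y => ‖v y‖ ^ 2) = fun y => ⟪v y, v y⟫ :=
    funext fun y => (real_inner_self_eq_norm_sq _).symm
  have hN : DifferentiableAt ℝ (fun y => ‖v y‖ ^ 2) x := by
    rw [hNfun]; exact hv.inner ℝ hv
  have hNap : ∀ z, fderiv ℝ (fun y => ‖v y‖ ^ 2) x z = 2 * ⟪v x, fderiv ℝ v x z⟫ := by
    intro z
    rw [hNfun, fderiv_inner_apply ℝ hv hv, real_inner_comm (fderiv ℝ v x z) (v x)]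
    ring
  -- the function under the square root
  have hufun : (fun y => 1 + ‖v y‖ ^ 2 / c ^ 2)
      = fun y => 1 + (fun y => ‖v y‖ ^ 2) y * ((c:ℝ) ^ 2)⁻¹ := by
    funext y; rw [div_eq_mul_inv]
  have hu : DifferentiableAt ℝ (fun y => 1 + ‖v y‖ ^ 2 / c ^ 2) x := by
    rw [hufun]; exact (hN.mul_const _).const_add 1
  have huap : ∀ z, fderiv ℝ (fun y => 1 + ‖v y‖ ^ 2 / c ^ 2) x z
      = 2 * ⟪v x, fderiv ℝ v x z⟫ / c ^ 2 := by
    intro z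
    rw [hufun, fderiv_const_add, fderiv_mul_const hN]
    simp [hNap z]
    ring
  -- γ
  have hΓ : DifferentiableAt ℝ (fun y => Real.sqrt (1 + ‖v y‖ ^ 2 / c ^ 2)) x := hu.sqrt hune
  have hΓap : ∀ z, fderiv ℝ (fun y => Real.sqrt (1 + ‖v y‖ ^ 2 / c ^ 2)) x z
      = ⟪v x, fderiv ℝ v x z⟫ / (c ^ 2 * Real.sqrt (1 + ‖v x‖ ^ 2 / c ^ 2)) := by
    intro z
    rw [fderiv_sqrt hu hune]
    simp only [ContinuousLinearMap.coe_smul', Pi.smul_apply, smul_eq_mul, huap z]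
    field_simp
  -- 1/γ
  have hg : DifferentiableAt ℝ (fun y => (Real.sqrt (1 + ‖v y‖ ^ 2 / c ^ 2))⁻¹) x := hΓ.inv hGne
  have hgap : ∀ z, fderiv ℝ (fun y => (Real.sqrt (1 + ‖v y‖ ^ 2 / c ^ 2))⁻¹) x z
      = -(⟪v x, fderiv ℝ v x z⟫
          / (c ^ 2 * Real.sqrt (1 + ‖v x‖ ^ 2 / c ^ 2) ^ 3)) := by
    intro z
    have hcomp : (fun y => (Real.sqrt (1 + ‖v y‖ ^ 2 / c ^ 2))⁻¹)
        = Inv.inv ∘ (fun y => Real.sqrt (1 + ‖v y‖ ^ 2 / c ^ 2)) := rfl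
    rw [hcomp, ((hasDerivAt_inv hGne).comp_hasFDerivAt x hΓ.hasFDerivAt).fderiv]
    simp only [ContinuousLinearMap.coe_smul', Pi.smul_apply, smul_eq_mul, hΓap z]
    set G := Real.sqrt (1 + ‖v x‖ ^ 2 / c ^ 2) with hGdef
    field_simp
    try ring
    try exact Or.inl trivial
  -- rewrite the two product lambdas in the goal
  have hf1 : (fun y => ρ y * ⟪(Real.sqrt (1 + ‖v y‖ ^ 2 / c ^ 2))⁻¹ • v y, v y⟫)
      = fun y => ρ y * ((Real.sqrt (1 + ‖v y‖ ^ 2 / c ^ 2))⁻¹ * ‖v y‖ ^ 2) := by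
    funext y; rw [real_inner_smul_left, real_inner_self_eq_norm_sq]
  have hGf : (fun y => ρ y • (Real.sqrt (1 + ‖v y‖ ^ 2 / c ^ 2))⁻¹ • v y)
      = fun y => (ρ y * (Real.sqrt (1 + ‖v y‖ ^ 2 / c ^ 2))⁻¹) • v y := by
    funext y; rw [smul_smul]
  rw [hf1, hGf]
  -- derivative of ρ * (γ⁻¹ * ‖v‖²)
  have hf1ap : ∀ z, fderiv ℝ (fun y => ρ y * ((Real.sqrt (1 + ‖v y‖ ^ 2 / c ^ 2))⁻¹ * ‖v y‖ ^ 2)) x z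
      = ρ x * ((Real.sqrt (1 + ‖v x‖ ^ 2 / c ^ 2))⁻¹ * (2 * ⟪v x, fderiv ℝ v x z⟫)
          + ‖v x‖ ^ 2 * (-(⟪v x, fderiv ℝ v x z⟫
              / (c ^ 2 * Real.sqrt (1 + ‖v x‖ ^ 2 / c ^ 2) ^ 3))))
        + ((Real.sqrt (1 + ‖v x‖ ^ 2 / c ^ 2))⁻¹ * ‖v x‖ ^ 2) * fderiv ℝ ρ x z := by
    intro z
    rw [fderiv_fun_mul hρ (hg.fun_mul hN)]
    simp only [ContinuousLinearMap.add_apply, ContinuousLinearMap.coe_smul', Pi.smul_apply,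
      smul_eq_mul]
    rw [fderiv_fun_mul hg hN]
    simp only [ContinuousLinearMap.add_apply, ContinuousLinearMap.coe_smul', Pi.smul_apply,
      smul_eq_mul, hNap z, hgap z]
  -- derivative of the vector field (ρ γ⁻¹) • v, componentwise
  have hGfap : ∀ z (k : Fin 3),
      fderiv ℝ (fun y => (ρ y * (Real.sqrt (1 + ‖v y‖ ^ 2 / c ^ 2))⁻¹) • v y) x z k
      = (ρ x * (Real.sqrt (1 + ‖v x‖ ^ 2 / c ^ 2))⁻¹) * fderiv ℝ v x z k
        + (ρ x * (-(⟪v x, fderiv ℝ v x z⟫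
              / (c ^ 2 * Real.sqrt (1 + ‖v x‖ ^ 2 / c ^ 2) ^ 3)))
            + (Real.sqrt (1 + ‖v x‖ ^ 2 / c ^ 2))⁻¹ * fderiv ℝ ρ x z) * v x k := by
    intro z k
    rw [fderiv_fun_smul (hρ.fun_mul hg) hv]
    simp only [ContinuousLinearMap.add_apply, ContinuousLinearMap.coe_smul', Pi.smul_apply,
      ContinuousLinearMap.smulRight_apply, PiLp.add_apply, PiLp.smul_apply, smul_eq_mul]
    rw [fderiv_fun_mul hρ hg]
    simp only [ContinuousLinearMap.add_apply, ContinuousLinearMap.coe_smul', Pi.smul_apply,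
      smul_eq_mul, hgap z]
    try ring
  -- left-hand side componentwise
  have hDvx : fderiv ℝ v x (v x)
      = v x 0 • fderiv ℝ v x (EuclideanSpace.single 0 1)
        + v x 1 • fderiv ℝ v x (EuclideanSpace.single 1 1)
        + v x 2 • fderiv ℝ v x (EuclideanSpace.single 2 1) := by
    conv_lhs => rw [eucl_decomp' (v x)]
    rw [map_add, map_add, map_smul, map_smul, map_smul]
  have hLHS : ∀ i : Fin 3,
      fderiv ℝ v x ((Real.sqrt (1 + ‖v x‖ ^ 2 / c ^ 2))⁻¹ • v x) i
      = (Real.sqrt (1 + ‖v x‖ ^ 2 / c ^ 2))⁻¹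
        * (v x 0 * fderiv ℝ v x (EuclideanSpace.single 0 1) i
          + v x 1 * fderiv ℝ v x (EuclideanSpace.single 1 1) i
          + v x 2 * fderiv ℝ v x (EuclideanSpace.single 2 1) i) := by
    intro i
    rw [map_smul, hDvx]
    simp only [PiLp.add_apply, PiLp.smul_apply, smul_eq_mul]
    try ring
  -- finish componentwise
  ext i
  fin_cases i <;>
    · simp only [PiLp.sub_apply, PiLp.smul_apply, smul_eq_mul, Fin.isValue,
        cross3_apply', curl3_apply', Matrix.cons_val_zero, Matrix.cons_val_one,
        Matrix.head_cons, Matrix.cons_val_two, Matrix.tail_cons, Fin.reduceFinMk, hLHS]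
      simp only [grad_apply', hf1ap, hΓap, hgap, hGfap, inner_expand']
      set G := Real.sqrt (1 + ‖v x‖ ^ 2 / c ^ 2) with hGdef2
      rw [normsq_expand' (v x)]
      field_simp
      ring
end

section
/- Let m, c > 0, ρ⁰, ρ¹ > 0 and M⁰, M¹ ∈ ℝ³. For ξ ∈ [0,1] set ρ^ξ = (1−ξ)·ρ¹ + ξ·ρ⁰, M^ξ = (1−ξ)·M¹ + ξ·M⁰, and γ^ξ = √(1 + ‖M^ξ‖²/((ρ^ξ)²·c²)). Then ρ¹·(√(1 + ‖M¹‖²/((ρ¹)²c²)) − 1)·c² − ρ⁰·(√(1 + ‖M⁰‖²/((ρ⁰)²c²)) − 1)·c² = ∫₀¹ [ (ρ¹ − ρ⁰)·(γ^ξ − 1 − ‖M^ξ‖²/((ρ^ξ)²·c²·γ^ξ))·c² + ⟨M¹ − M⁰, M^ξ/(ρ^ξ·γ^ξ)⟩ ] dξ. -/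
open scoped RealInnerProductSpace

private lemma avf_aux (r0 r1 p a c2 N J : ℝ) (hp : p ≠ 0) (ha : a ≠ 0) (hc2 : c2 ≠ 0)
    (hN : N = (a ^ 2 - 1) * (p ^ 2 * c2)) :
    (r1 - r0) * (a - 1 - N / (p ^ 2 * c2 * a)) * c2 + (p * a)⁻¹ * J
    = -(((r0 - r1) * (a - 1)
        + p * ((2 * -J * (p ^ 2 * c2) - N * (2 * p * (r0 - r1) * c2)) / (p ^ 2 * c2) ^ 2
            / (2 * a))) * c2) := by
  subst hN; field_simp; ring

/-- AVF identity for the fluid kinetic energy density `ρ(γ(mM/ρ) − 1)c²`, with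
`ρ^ξ = (1−ξ)ρ¹ + ξρ⁰`, `M^ξ = (1−ξ)M¹ + ξM⁰`, `γ^ξ = √(1 + ‖M^ξ‖²/((ρ^ξ)²c²))`
(key step of Proposition 4.3). -/
theorem stmt_17 (m c : ℝ) (hm : 0 < m) (hc : 0 < c)
    (ρ0 ρ1 : ℝ) (hρ0 : 0 < ρ0) (hρ1 : 0 < ρ1)
    (M0 M1 : EuclideanSpace ℝ (Fin 3)) :
    ρ1 * (Real.sqrt (1 + ‖M1‖ ^ 2 / (ρ1 ^ 2 * c ^ 2)) - 1) * c ^ 2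
      - ρ0 * (Real.sqrt (1 + ‖M0‖ ^ 2 / (ρ0 ^ 2 * c ^ 2)) - 1) * c ^ 2
    = ∫ ξ in (0:ℝ)..1,
        ((ρ1 - ρ0) *
            (Real.sqrt (1 + ‖(1 - ξ) • M1 + ξ • M0‖ ^ 2 / (((1 - ξ) * ρ1 + ξ * ρ0) ^ 2 * c ^ 2))
              - 1
              - ‖(1 - ξ) • M1 + ξ • M0‖ ^ 2
                / (((1 - ξ) * ρ1 + ξ * ρ0) ^ 2 * c ^ 2
                  * Real.sqrt (1 + ‖(1 - ξ) • M1 + ξ • M0‖ ^ 2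
                      / (((1 - ξ) * ρ1 + ξ * ρ0) ^ 2 * c ^ 2)))) * c ^ 2
          + ⟪M1 - M0,
              (((1 - ξ) * ρ1 + ξ * ρ0)
                  * Real.sqrt (1 + ‖(1 - ξ) • M1 + ξ • M0‖ ^ 2
                      / (((1 - ξ) * ρ1 + ξ * ρ0) ^ 2 * c ^ 2)))⁻¹
                • ((1 - ξ) • M1 + ξ • M0)⟫) := by
  have hc2 : (0:ℝ) < c ^ 2 := by positivity
  set ρ : ℝ → ℝ := fun ξ => (1 - ξ) * ρ1 + ξ * ρ0 with hρdef
  set Mf : ℝ → EuclideanSpace ℝ (Fin 3) := fun ξ => (1 - ξ) • M1 + ξ • M0 with hMdef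
  set A : ℝ → ℝ := fun ξ => 1 + ‖Mf ξ‖ ^ 2 / (ρ ξ ^ 2 * c ^ 2) with hAdef
  set g : ℝ → ℝ := fun ξ =>
      (ρ1 - ρ0) * (Real.sqrt (A ξ) - 1
        - ‖Mf ξ‖ ^ 2 / (ρ ξ ^ 2 * c ^ 2 * Real.sqrt (A ξ))) * c ^ 2
      + ⟪M1 - M0, (ρ ξ * Real.sqrt (A ξ))⁻¹ • Mf ξ⟫ with hgdef
  set F : ℝ → ℝ := fun ξ => -(ρ ξ * (Real.sqrt (A ξ) - 1) * c ^ 2) with hFdef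
  -- positivity facts on [0,1]
  have hρpos : ∀ ξ ∈ Set.uIcc (0:ℝ) 1, 0 < ρ ξ := by
    intro ξ hξ
    rw [Set.uIcc_of_le (by norm_num)] at hξ
    obtain ⟨h0, h1⟩ := hξ
    rcases eq_or_lt_of_le h0 with h | h
    · simp [hρdef, ← h]; linarith
    · have h2 : 0 < ξ * ρ0 := mul_pos h hρ0
      have h3 : 0 ≤ (1 - ξ) * ρ1 := mul_nonneg (by linarith) hρ1.le
      simp only [hρdef]; linarith
  have hApos : ∀ ξ, 0 < ρ ξ → 0 < A ξ := by
    intro ξ hξ; simp only [hAdef]; positivity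
  -- derivative
  have hderiv : ∀ ξ ∈ Set.uIcc (0:ℝ) 1, HasDerivAt F (g ξ) ξ := by
    intro ξ hξ
    have hρx : 0 < ρ ξ := hρpos ξ hξ
    have hAx : 0 < A ξ := hApos ξ hρx
    have hsq : 0 < Real.sqrt (A ξ) := Real.sqrt_pos.mpr hAx
    have hsqsq : Real.sqrt (A ξ) ^ 2 = A ξ := Real.sq_sqrt hAx.le
    have hρ' : HasDerivAt ρ (ρ0 - ρ1) ξ := by
      have : HasDerivAt (fun ξ : ℝ => (1 - ξ) * ρ1 + ξ * ρ0)
          ((0 - 1) * ρ1 + 1 * ρ0) ξ :=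
        (((hasDerivAt_const ξ (1:ℝ)).sub (hasDerivAt_id ξ)).mul_const ρ1).add
          ((hasDerivAt_id ξ).mul_const ρ0)
      convert this using 1; ring
    have hM' : HasDerivAt Mf (M0 - M1) ξ := by
      have : HasDerivAt (fun ξ : ℝ => (1 - ξ) • M1 + ξ • M0)
          (((0:ℝ) - 1) • M1 + (1:ℝ) • M0) ξ :=
        (((hasDerivAt_const ξ (1:ℝ)).sub (hasDerivAt_id ξ)).smul_const M1).add
          ((hasDerivAt_id ξ).smul_const M0)
      convert this using 1
      simp [sub_eq_add_neg, add_comm]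
    have hN : HasDerivAt (fun t => ‖Mf t‖ ^ 2)
        (2 * ⟪M0 - M1, Mf ξ⟫) ξ := by
      have h := HasDerivAt.inner (𝕜 := ℝ) hM' hM'
      have heq : (fun t => ⟪Mf t, Mf t⟫) = fun t => ‖Mf t‖ ^ 2 := by
        funext t; rw [real_inner_self_eq_norm_sq]
      rw [heq] at h
      exact h.congr_deriv (by rw [real_inner_comm]; ring)
    have hden : HasDerivAt (fun t => ρ t ^ 2 * c ^ 2)
        (2 * ρ ξ * (ρ0 - ρ1) * c ^ 2) ξ := by
      have := ((hρ'.pow 2).mul_const (c ^ 2))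
      exact this.congr_deriv (by ring)
    have hA' : HasDerivAt A
        ((2 * ⟪M0 - M1, Mf ξ⟫ * (ρ ξ ^ 2 * c ^ 2)
          - ‖Mf ξ‖ ^ 2 * (2 * ρ ξ * (ρ0 - ρ1) * c ^ 2)) / (ρ ξ ^ 2 * c ^ 2) ^ 2) ξ := by
      exact (hasDerivAt_const ξ (1:ℝ)).add (hN.div hden (by positivity))
        |>.congr_deriv (by ring)
    have hγ := hA'.sqrt (ne_of_gt hAx)
    have hF := ((hρ'.mul (hγ.sub_const 1)).mul_const (c ^ 2)).neg
    refine hF.congr_deriv (Eq.symm ?_)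
    -- algebraic identity
    have hinner : ⟪M1 - M0, (ρ ξ * Real.sqrt (A ξ))⁻¹ • Mf ξ⟫
        = (ρ ξ * Real.sqrt (A ξ))⁻¹ * ⟪M1 - M0, Mf ξ⟫ := real_inner_smul_right _ _ _
    have hneg : ⟪M0 - M1, Mf ξ⟫ = -⟪M1 - M0, Mf ξ⟫ := by
      rw [show M0 - M1 = -(M1 - M0) by abel, inner_neg_left]
    have hNval : ‖Mf ξ‖ ^ 2 = (Real.sqrt (A ξ) ^ 2 - 1) * (ρ ξ ^ 2 * c ^ 2) := by
      rw [hsqsq]; simp only [hAdef]; field_simp; ring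
    simp only [hgdef, hinner, hneg]
    exact avf_aux ρ0 ρ1 (ρ ξ) (Real.sqrt (A ξ)) (c ^ 2) (‖Mf ξ‖ ^ 2)
      ⟪M1 - M0, Mf ξ⟫ hρx.ne' hsq.ne' hc2.ne' hNval
  -- continuity / integrability
  have hcont : ContinuousOn g (Set.uIcc (0:ℝ) 1) := by
    have hρc : Continuous ρ := by fun_prop
    have hMc : Continuous Mf := by
      simp only [hMdef]; fun_prop
    have hNc : Continuous fun ξ => ‖Mf ξ‖ ^ 2 := by fun_prop
    have hdenne : ∀ ξ ∈ Set.uIcc (0:ℝ) 1, ρ ξ ^ 2 * c ^ 2 ≠ 0 := fun ξ hξ => by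
      have := hρpos ξ hξ; positivity
    have hAc : ContinuousOn A (Set.uIcc (0:ℝ) 1) := by
      simp only [hAdef]
      exact continuousOn_const.add (hNc.continuousOn.div
        ((hρc.pow 2).mul continuous_const).continuousOn hdenne)
    have hsqc : ContinuousOn (fun ξ => Real.sqrt (A ξ)) (Set.uIcc (0:ℝ) 1) :=
      Real.continuous_sqrt.comp_continuousOn hAc
    have hsqne : ∀ ξ ∈ Set.uIcc (0:ℝ) 1, Real.sqrt (A ξ) ≠ 0 := fun ξ hξ =>
      ne_of_gt (Real.sqrt_pos.mpr (hApos ξ (hρpos ξ hξ)))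
    apply ContinuousOn.add
    · exact ((continuousOn_const.mul ((hsqc.sub continuousOn_const).sub
        (hNc.continuousOn.div ((((hρc.pow 2).mul continuous_const).continuousOn).mul hsqc)
          (fun ξ hξ => mul_ne_zero (hdenne ξ hξ) (hsqne ξ hξ))))).mul continuousOn_const)
    · apply ContinuousOn.inner continuousOn_const
      exact ContinuousOn.smul
        ((hρc.continuousOn.mul hsqc).inv₀
          (fun ξ hξ => mul_ne_zero (ne_of_gt (hρpos ξ hξ)) (hsqne ξ hξ)))
        hMc.continuousOn
  have hint : IntervalIntegrable g MeasureTheory.volume 0 1 :=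
    hcont.intervalIntegrable
  have hkey := intervalIntegral.integral_eq_sub_of_hasDerivAt hderiv hint
  have hRHS : (∫ ξ in (0:ℝ)..1, g ξ) = F 1 - F 0 := hkey
  rw [hRHS]
  simp only [hFdef, hρdef, hMdef, hAdef]
  norm_num
  ring
end
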